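/- Let m ≥ 3 be divisible by 3 and let X = X_b^2(m) be the graph on vertex set Z_m × Z_8 defined by: (i,j) ~ (i, j+1) for all i ∈ Z_m, j ∈ Z_8; (i, 2i + δ) ~ (i+1, 2i + δ) and (i, 2i + 4 + δ) ~ (i+1, 2i + 5 − δ) for 0 ≤ i ≤ m − 2 and δ ∈ {0,1}; and (m−1, 2(m−1) + δ) ~ (0, 6 + δ) and (m−1, 2(m−1) + 4 + δ) ~ (0, 3 − δ) for δ ∈ {0,1}. If m > 3, then the only cycles of length 8 in X are the m cycles induced on the sets V_i = {(i, j) : j ∈ Z_8}, i ∈ Z_m. -/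
import Mathlib


/-- The generating relation for the graph `X_b^2(m)` of Construction 5.3. -/
def Xb2Rel (m : ℕ) (p q : ZMod m × ZMod 8) : Prop :=
  (p.1 = q.1 ∧ q.2 = p.2 + 1) ∨
  (∃ i δ : ℕ, i ≤ m - 2 ∧ δ ≤ 1 ∧
    ((p = ((i : ZMod m), ((2 * i + δ : ℕ) : ZMod 8)) ∧
        q = (((i + 1 : ℕ) : ZMod m), ((2 * i + δ : ℕ) : ZMod 8))) ∨
     (p = ((i : ZMod m), ((2 * i + 4 + δ : ℕ) : ZMod 8)) ∧
        q = (((i + 1 : ℕ) : ZMod m),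
          ((2 * i + 5 : ℕ) : ZMod 8) - (δ : ZMod 8))))) ∨
  (∃ δ : ℕ, δ ≤ 1 ∧
    ((p = (((m - 1 : ℕ) : ZMod m), ((2 * (m - 1) + δ : ℕ) : ZMod 8)) ∧
        q = ((0 : ZMod m), ((6 + δ : ℕ) : ZMod 8))) ∨
     (p = (((m - 1 : ℕ) : ZMod m), ((2 * (m - 1) + 4 + δ : ℕ) : ZMod 8)) ∧
        q = ((0 : ZMod m), (3 : ZMod 8) - (δ : ZMod 8)))))

/-- The graph `X_b^2(m)` of Construction 5.3. -/
def Xb2 (m : ℕ) : SimpleGraph (ZMod m × ZMod 8) :=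
  SimpleGraph.fromRel (Xb2Rel m)


namespace Stmt13aux

open SimpleGraph

def tau (a : ZMod 8) : ZMod 8 := if a = 4 then 3 else if a = 5 then 2 else a + 6
def tauInv (b : ZMod 8) : ZMod 8 := if b = 3 then 4 else if b = 2 then 5 else b + 2
def LOK (a : ZMod 8) : Prop := a = 0 ∨ a = 1 ∨ a = 4 ∨ a = 5
instance : DecidablePred LOK := fun a => by unfold LOK; infer_instance
def ROK (a : ZMod 8) : Prop := a = 6 ∨ a = 7 ∨ a = 3 ∨ a = 2
instance : DecidablePred ROK := fun a => by unfold ROK; infer_instance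
def Fv {m : ℕ} (p : ZMod m × ZMod 8) : ZMod 8 := p.2 - 2 * (p.1.val : ZMod 8)
def Vh {m : ℕ} (p q : ZMod m × ZMod 8) : Prop :=
  p.1 = q.1 ∧ (q.2 = p.2 + 1 ∨ p.2 = q.2 + 1)
def Lh {m : ℕ} (p q : ZMod m × ZMod 8) : Prop :=
  q.1 = p.1 + 1 ∧ LOK (Fv p) ∧ Fv q = tau (Fv p)
lemma ROK_tau {a : ZMod 8} (h : LOK a) : ROK (tau a) := by revert h; revert a; decide
lemma LOK_not_ROK {a : ZMod 8} (h : LOK a) (h2 : ROK a) : False := by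
  revert h h2; revert a; decide
lemma tau_inj {a b : ZMod 8} (ha : LOK a) (hb : LOK b) (h : tau a = tau b) : a = b := by
  revert ha hb h; revert a b; decide
lemma tauInv_tau {a : ZMod 8} (ha : LOK a) : tauInv (tau a) = a := by
  revert ha; revert a; decide

lemma h2dec (l1 l2 : ℕ) (h1 : 1 ≤ l1) (h2 : l1 ≤ 5) (hs : l1 + l2 = 6) :
    ∀ a b : ZMod 8, LOK a → LOK b →
      (tau b = tau a + (l1 : ZMod 8) ∨ tau b = tau a - (l1 : ZMod 8)) →
      (a = b + (l2 : ZMod 8) ∨ a = b - (l2 : ZMod 8)) → False := by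
  have hb : l2 ≤ 5 := by omega
  interval_cases l1 <;> interval_cases l2 <;> first | omega | decide

lemma patA : ∀ p0 p2 p4 p6 : ZMod 8, LOK p0 →
    (p2 = tau p0 + 1 ∨ tau p0 = p2 + 1) → LOK p2 →
    (p4 = tau p2 + 1 ∨ tau p2 = p4 + 1) → ROK p4 →
    (p6 = tauInv p4 + 1 ∨ tauInv p4 = p6 + 1) → ROK p6 →
    (p0 = tauInv p6 + 1 ∨ tauInv p6 = p0 + 1) → False := by decide

lemma patB : ∀ p0 p2 p4 p6 : ZMod 8, LOK p0 →
    (p2 = tau p0 + 1 ∨ tau p0 = p2 + 1) → ROK p2 →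
    (p4 = tauInv p2 + 1 ∨ tauInv p2 = p4 + 1) → LOK p4 →
    (p6 = tau p4 + 1 ∨ tau p4 = p6 + 1) → ROK p6 →
    (p0 = tauInv p6 + 1 ∨ tauInv p6 = p0 + 1) → p0 ≠ p4 → False := by decide

lemma patC : ∀ p0 p2 p4 p6 : ZMod 8, LOK p0 →
    (p2 = tau p0 + 1 ∨ tau p0 = p2 + 1) → ROK p2 →
    (p4 = tauInv p2 + 1 ∨ tauInv p2 = p4 + 1) → ROK p4 →
    (p6 = tauInv p4 + 1 ∨ tauInv p4 = p6 + 1) → LOK p6 →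
    (p0 = tau p6 + 1 ∨ tau p6 = p0 + 1) → False := by decide

variable {m : ℕ}

lemma eq_of_col_F {p q : ZMod m × ZMod 8} (h1 : p.1 = q.1) (h2 : Fv p = Fv q) : p = q := by
  have : p.2 = q.2 := by
    have := congrArg (fun x : ZMod m => ((x.val : ZMod 8))) h1
    unfold Fv at h2
    linear_combination h2 + 2 * this
  exact Prod.ext h1 this

lemma adjH {p q r : ZMod m × ZMod 8} (h1 : Lh p q ∨ Lh q p) (h2 : Lh q r ∨ Lh r q) :
    p = r := by
  rcases h1 with ⟨hc1, hl1, ht1⟩ | ⟨hc1, hl1, ht1⟩ <;>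
    rcases h2 with ⟨hc2, hl2, ht2⟩ | ⟨hc2, hl2, ht2⟩
  · exact (LOK_not_ROK hl2 (ht1 ▸ ROK_tau hl1)).elim
  · exact eq_of_col_F (add_right_cancel (hc1.symm.trans hc2))
      (tau_inj hl1 hl2 (ht1.symm.trans ht2))
  · exact eq_of_col_F (hc1.trans hc2.symm) (ht1.trans ht2.symm)
  · exact (LOK_not_ROK hl1 (ht2 ▸ ROK_tau hl2)).elim

lemma Kne (hm : 6 ≤ m) (K : ℕ) (h0 : 0 < K) (h5 : K < 6) (h : (K : ZMod m) = 0) : False := by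
  haveI : NeZero m := ⟨by omega⟩
  rw [ZMod.natCast_eq_zero_iff] at h
  have := Nat.le_of_dvd h0 h
  omega

lemma vrun_dir (u : ℕ → ZMod m × ZMod 8) :
    ∀ ℓ i, (∀ k, i ≤ k → k < i + ℓ → Vh (u k) (u (k + 1))) →
      (∀ k, i ≤ k → k + 2 ≤ i + ℓ → u (k + 2) ≠ u k) →
      (∀ k, i ≤ k → k < i + ℓ → (u (k + 1)).2 = (u k).2 + 1) ∨
      (∀ k, i ≤ k → k < i + ℓ → (u k).2 = (u (k + 1)).2 + 1) := by
  intro ℓ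
  induction ℓ with
  | zero => exact fun i _ _ => Or.inl (fun k h1 h2 => absurd h2 (by omega))
  | succ n ih =>
    intro i hstep hne
    rcases n with - | n'
    · rcases (hstep i (le_refl i) (by omega)).2 with h | h
      · exact Or.inl (fun k h1 h2 => by rw [show k = i from by omega]; exact h)
      · exact Or.inr (fun k h1 h2 => by rw [show k = i from by omega]; exact h)
    · have IH := ih i (fun k h1 h2 => hstep k h1 (by omega))
        (fun k h1 h2 => hne k h1 (by omega))
      have hlast := hstep (i + (n' + 1)) (by omega) (by omega)
      rcases IH with Hup | Hdn
      · rcases hlast.2 with hup | hdn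
        · refine Or.inl (fun k h1 h2 => ?_)
          rcases Nat.lt_or_ge k (i + (n' + 1)) with hk | hk
          · exact Hup k h1 hk
          · have : k = i + (n' + 1) := by omega
            subst this; exact hup
        · exfalso
          have hprev := Hup (i + n') (by omega) (by omega)
          have hcolp := (hstep (i + n') (by omega) (by omega)).1
          have hcoll := hlast.1
          have hsnd : (u (i + n' + 1 + 1)).2 = (u (i + n')).2 := by
            have : (u (i + n')).2 + 1 = (u (i + n' + 1 + 1)).2 + 1 := by
              rw [← hprev]; exact hdn
            exact (add_right_cancel this).symm
          have hv : u (i + n' + 2) = u (i + n') := by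
            have e1 : i + n' + 1 + 1 = i + n' + 2 := by omega
            refine Prod.ext ?_ ?_
            · rw [← e1]; exact (hcolp.trans hcoll).symm
            · rw [← e1]; exact hsnd
          exact hne (i + n') (by omega) (by omega) hv
      · rcases hlast.2 with hup | hdn
        · exfalso
          have hprev := Hdn (i + n') (by omega) (by omega)
          have hcolp := (hstep (i + n') (by omega) (by omega)).1
          have hcoll := hlast.1
          have hsnd : (u (i + n' + 1 + 1)).2 = (u (i + n')).2 := by
            have : (u (i + n' + 1 + 1)).2 = (u (i + n' + 1)).2 + 1 := hup
            rw [this, ← hprev]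
          have hv : u (i + n' + 2) = u (i + n') := by
            have e1 : i + n' + 1 + 1 = i + n' + 2 := by omega
            refine Prod.ext ?_ ?_
            · rw [← e1]; exact (hcolp.trans hcoll).symm
            · rw [← e1]; exact hsnd
          exact hne (i + n') (by omega) (by omega) hv
        · refine Or.inr (fun k h1 h2 => ?_)
          rcases Nat.lt_or_ge k (i + (n' + 1)) with hk | hk
          · exact Hdn k h1 hk
          · have : k = i + (n' + 1) := by omega
            subst this; exact hdn

lemma vrun (u : ℕ → ZMod m × ZMod 8) (ℓ i : ℕ)
    (hstep : ∀ k, i ≤ k → k < i + ℓ → Vh (u k) (u (k + 1)))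
    (hne : ∀ k, i ≤ k → k + 2 ≤ i + ℓ → u (k + 2) ≠ u k) :
    (u (i + ℓ)).2 = (u i).2 + (ℓ : ZMod 8) ∨ (u (i + ℓ)).2 = (u i).2 - (ℓ : ZMod 8) := by
  rcases vrun_dir u ℓ i hstep hne with H | H
  · left
    clear hstep hne
    induction ℓ with
    | zero => simp
    | succ n ih =>
      have := H (i + n) (by omega) (by omega)
      rw [show i + (n + 1) = i + n + 1 from by omega, this,
        ih (fun k h1 h2 => H k h1 (by omega))]
      push_cast; ring
  · right
    clear hstep hne
    induction ℓ with
    | zero => simp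
    | succ n ih =>
      have := H (i + n) (by omega) (by omega)
      have ihh := ih (fun k h1 h2 => H k h1 (by omega))
      have : (u (i + n + 1)).2 = (u (i + n)).2 - 1 := by linear_combination -this
      rw [show i + (n + 1) = i + n + 1 from by omega, this, ihh]
      push_cast; ring

lemma key {m : ℕ} (hm : 6 ≤ m) (u : ℕ → ZMod m × ZMod 8)
    (hadj : ∀ k, k < 8 → Vh (u k) (u (k + 1)) ∨ Lh (u k) (u (k + 1)) ∨ Lh (u (k + 1)) (u k))
    (hper : u 8 = u 0)
    (hne : ∀ j k, j < k → k < 8 → u j ≠ u k)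
    (h0 : Lh (u 0) (u 1)) : False := by
  obtain ⟨n0, lok0, ftau0⟩ := h0
  have h0' : Lh (u 0) (u 1) := ⟨n0, lok0, ftau0⟩
  have A1 : Vh (u 1) (u 2) ∨ Lh (u 1) (u 2) ∨ Lh (u 2) (u 1) := hadj 1 (by norm_num)
  have A2 : Vh (u 2) (u 3) ∨ Lh (u 2) (u 3) ∨ Lh (u 3) (u 2) := hadj 2 (by norm_num)
  have A3 : Vh (u 3) (u 4) ∨ Lh (u 3) (u 4) ∨ Lh (u 4) (u 3) := hadj 3 (by norm_num)
  have A4 : Vh (u 4) (u 5) ∨ Lh (u 4) (u 5) ∨ Lh (u 5) (u 4) := hadj 4 (by norm_num)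
  have A5 : Vh (u 5) (u 6) ∨ Lh (u 5) (u 6) ∨ Lh (u 6) (u 5) := hadj 5 (by norm_num)
  have A6 : Vh (u 6) (u 7) ∨ Lh (u 6) (u 7) ∨ Lh (u 7) (u 6) := hadj 6 (by norm_num)
  have A7 : Vh (u 7) (u 0) ∨ Lh (u 7) (u 0) ∨ Lh (u 0) (u 7) := by
    rw [← hper]; exact hadj 7 (by norm_num)
  obtain ⟨c1, s1⟩ : Vh (u 1) (u 2) := by
    rcases A1 with h | h | h
    · exact h
    · exact absurd (adjH (Or.inl h0') (Or.inl h)) (hne 0 2 (by omega) (by omega))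
    · exact absurd (adjH (Or.inl h0') (Or.inr h)) (hne 0 2 (by omega) (by omega))
  obtain ⟨c7, s7⟩ : Vh (u 7) (u 0) := by
    rcases A7 with h | h | h
    · exact h
    · exact absurd (adjH (Or.inl h) (Or.inl h0')) (hne 1 7 (by omega) (by omega)).symm
    · exact absurd (adjH (Or.inr h) (Or.inl h0')) (hne 1 7 (by omega) (by omega)).symm
  have n1 : (u 2).1 = (u 1).1 + 0 := by rw [add_zero]; exact c1.symm
  have n7 : (u 0).1 = (u 7).1 + 0 := by rw [add_zero]; exact c7.symm

  rcases A2 with ⟨c2, s2⟩ | ⟨c2, l2, f2⟩ | ⟨c2, l2, f2⟩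
  · -- e2 = V
    have n2 : (u 3).1 = (u 2).1 + 0 := by rw [add_zero]; exact c2.symm
    rcases A3 with ⟨c3, s3⟩ | ⟨c3, l3, f3⟩ | ⟨c3, l3, f3⟩
    · -- e3 = V
      have n3 : (u 4).1 = (u 3).1 + 0 := by rw [add_zero]; exact c3.symm
      rcases A4 with ⟨c4, s4⟩ | ⟨c4, l4, f4⟩ | ⟨c4, l4, f4⟩
      · -- e4 = V
        have n4 : (u 5).1 = (u 4).1 + 0 := by rw [add_zero]; exact c4.symm
        rcases A5 with ⟨c5, s5⟩ | ⟨c5, l5, f5⟩ | ⟨c5, l5, f5⟩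
        · -- e5 = V
          have n5 : (u 6).1 = (u 5).1 + 0 := by rw [add_zero]; exact c5.symm
          rcases A6 with ⟨c6, s6⟩ | ⟨c6, l6, f6⟩ | ⟨c6, l6, f6⟩
          · -- e6 = V
            have n6 : (u 7).1 = (u 6).1 + 0 := by rw [add_zero]; exact c6.symm
            exact Kne hm 1 (by norm_num) (by norm_num) (by push_cast; linear_combination -(n0 + n1 + n2 + n3 + n4 + n5 + n6 + n7))
          · -- e6 = L
            have n6 : (u 7).1 = (u 6).1 + 1 := c6
            exact Kne hm 2 (by norm_num) (by norm_num) (by push_cast; linear_combination -(n0 + n1 + n2 + n3 + n4 + n5 + n6 + n7))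
          · -- e6 = R
            have n6 : (u 7).1 = (u 6).1 + (-1) := by linear_combination -c6
            have ec1 : (u 6).1 = (u 1).1 := by linear_combination n1 + n2 + n3 + n4 + n5
            have hv1 : (((u 6).1.val : ZMod 8)) = (((u 1).1.val : ZMod 8)) := by rw [ec1]
            have run1' : (u 6).2 = (u 1).2 + ((5 : ℕ) : ZMod 8) ∨ (u 6).2 = (u 1).2 - ((5 : ℕ) : ZMod 8) :=
              vrun u 5 1 (by intro k h1 h2; interval_cases k <;> first | exact ⟨c1, s1⟩ | exact ⟨c2, s2⟩ | exact ⟨c3, s3⟩ | exact ⟨c4, s4⟩ | exact ⟨c5, s5⟩)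
                (fun k h1 h2 => (hne k (k + 2) (by omega) (by omega)).symm)
            have hr1 : tau (Fv (u 7)) = tau (Fv (u 0)) + ((5 : ℕ) : ZMod 8) ∨
                tau (Fv (u 7)) = tau (Fv (u 0)) - ((5 : ℕ) : ZMod 8) := by
              rw [← f6, ← ftau0]
              rcases run1' with h | h
              · left; simp only [Fv]; linear_combination h - 2 * hv1
              · right; simp only [Fv]; linear_combination h - 2 * hv1
            have ec2 : (u 0).1 = (u 7).1 := by linear_combination n7
            have hv2 : (((u 0).1.val : ZMod 8)) = (((u 7).1.val : ZMod 8)) := by rw [ec2]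
            have run2' : (u 8).2 = (u 7).2 + ((1 : ℕ) : ZMod 8) ∨ (u 8).2 = (u 7).2 - ((1 : ℕ) : ZMod 8) :=
              vrun u 1 7 (by intro k h1 h2; interval_cases k <;> first | exact (show Vh (u 7) (u 8) by rw [hper]; exact ⟨c7, s7⟩))
                (by intro k h1 h2
                    rcases Nat.lt_or_ge (k + 2) 8 with hh | hh
                    · exact (hne k (k + 2) (by omega) (by omega)).symm
                    · rw [show k = 6 from by omega]
                      show u 8 ≠ u 6
                      rw [hper]
                      exact hne 0 6 (by omega) (by omega))
            rw [hper] at run2'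
            have hr2 : Fv (u 0) = Fv (u 7) + ((1 : ℕ) : ZMod 8) ∨ Fv (u 0) = Fv (u 7) - ((1 : ℕ) : ZMod 8) := by
              rcases run2' with h | h
              · left; simp only [Fv]; linear_combination h - 2 * hv2
              · right; simp only [Fv]; linear_combination h - 2 * hv2
            exact h2dec 5 1 (by norm_num) (by norm_num) (by norm_num) (Fv (u 0)) (Fv (u 7)) lok0 l6 hr1 hr2
        · -- e5 = L
          have n5 : (u 6).1 = (u 5).1 + 1 := c5
          rcases A6 with ⟨c6, s6⟩ | ⟨c6, l6, f6⟩ | ⟨c6, l6, f6⟩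
          · -- e6 = V
            have n6 : (u 7).1 = (u 6).1 + 0 := by rw [add_zero]; exact c6.symm
            exact Kne hm 2 (by norm_num) (by norm_num) (by push_cast; linear_combination -(n0 + n1 + n2 + n3 + n4 + n5 + n6 + n7))
          · -- e6 = L
            have n6 : (u 7).1 = (u 6).1 + 1 := c6
            exact hne 5 7 (by omega) (by omega) (adjH (Or.inl ⟨c5, l5, f5⟩) (Or.inl ⟨c6, l6, f6⟩))
          · -- e6 = R
            have n6 : (u 7).1 = (u 6).1 + (-1) := by linear_combination -c6
            exact hne 5 7 (by omega) (by omega) (adjH (Or.inl ⟨c5, l5, f5⟩) (Or.inr ⟨c6, l6, f6⟩))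
        · -- e5 = R
          have n5 : (u 6).1 = (u 5).1 + (-1) := by linear_combination -c5
          rcases A6 with ⟨c6, s6⟩ | ⟨c6, l6, f6⟩ | ⟨c6, l6, f6⟩
          · -- e6 = V
            have n6 : (u 7).1 = (u 6).1 + 0 := by rw [add_zero]; exact c6.symm
            have ec1 : (u 5).1 = (u 1).1 := by linear_combination n1 + n2 + n3 + n4
            have hv1 : (((u 5).1.val : ZMod 8)) = (((u 1).1.val : ZMod 8)) := by rw [ec1]
            have run1' : (u 5).2 = (u 1).2 + ((4 : ℕ) : ZMod 8) ∨ (u 5).2 = (u 1).2 - ((4 : ℕ) : ZMod 8) :=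
              vrun u 4 1 (by intro k h1 h2; interval_cases k <;> first | exact ⟨c1, s1⟩ | exact ⟨c2, s2⟩ | exact ⟨c3, s3⟩ | exact ⟨c4, s4⟩)
                (fun k h1 h2 => (hne k (k + 2) (by omega) (by omega)).symm)
            have hr1 : tau (Fv (u 6)) = tau (Fv (u 0)) + ((4 : ℕ) : ZMod 8) ∨
                tau (Fv (u 6)) = tau (Fv (u 0)) - ((4 : ℕ) : ZMod 8) := by
              rw [← f5, ← ftau0]
              rcases run1' with h | h
              · left; simp only [Fv]; linear_combination h - 2 * hv1
              · right; simp only [Fv]; linear_combination h - 2 * hv1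
            have ec2 : (u 0).1 = (u 6).1 := by linear_combination n6 + n7
            have hv2 : (((u 0).1.val : ZMod 8)) = (((u 6).1.val : ZMod 8)) := by rw [ec2]
            have run2' : (u 8).2 = (u 6).2 + ((2 : ℕ) : ZMod 8) ∨ (u 8).2 = (u 6).2 - ((2 : ℕ) : ZMod 8) :=
              vrun u 2 6 (by intro k h1 h2; interval_cases k <;> first | exact ⟨c6, s6⟩ | exact (show Vh (u 7) (u 8) by rw [hper]; exact ⟨c7, s7⟩))
                (by intro k h1 h2
                    rcases Nat.lt_or_ge (k + 2) 8 with hh | hh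
                    · exact (hne k (k + 2) (by omega) (by omega)).symm
                    · rw [show k = 6 from by omega]
                      show u 8 ≠ u 6
                      rw [hper]
                      exact hne 0 6 (by omega) (by omega))
            rw [hper] at run2'
            have hr2 : Fv (u 0) = Fv (u 6) + ((2 : ℕ) : ZMod 8) ∨ Fv (u 0) = Fv (u 6) - ((2 : ℕ) : ZMod 8) := by
              rcases run2' with h | h
              · left; simp only [Fv]; linear_combination h - 2 * hv2
              · right; simp only [Fv]; linear_combination h - 2 * hv2
            exact h2dec 4 2 (by norm_num) (by norm_num) (by norm_num) (Fv (u 0)) (Fv (u 6)) lok0 l5 hr1 hr2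
          · -- e6 = L
            have n6 : (u 7).1 = (u 6).1 + 1 := c6
            exact hne 5 7 (by omega) (by omega) (adjH (Or.inr ⟨c5, l5, f5⟩) (Or.inl ⟨c6, l6, f6⟩))
          · -- e6 = R
            have n6 : (u 7).1 = (u 6).1 + (-1) := by linear_combination -c6
            exact hne 5 7 (by omega) (by omega) (adjH (Or.inr ⟨c5, l5, f5⟩) (Or.inr ⟨c6, l6, f6⟩))
      · -- e4 = L
        have n4 : (u 5).1 = (u 4).1 + 1 := c4
        rcases A5 with ⟨c5, s5⟩ | ⟨c5, l5, f5⟩ | ⟨c5, l5, f5⟩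
        · -- e5 = V
          have n5 : (u 6).1 = (u 5).1 + 0 := by rw [add_zero]; exact c5.symm
          rcases A6 with ⟨c6, s6⟩ | ⟨c6, l6, f6⟩ | ⟨c6, l6, f6⟩
          · -- e6 = V
            have n6 : (u 7).1 = (u 6).1 + 0 := by rw [add_zero]; exact c6.symm
            exact Kne hm 2 (by norm_num) (by norm_num) (by push_cast; linear_combination -(n0 + n1 + n2 + n3 + n4 + n5 + n6 + n7))
          · -- e6 = L
            have n6 : (u 7).1 = (u 6).1 + 1 := c6
            exact Kne hm 3 (by norm_num) (by norm_num) (by push_cast; linear_combination -(n0 + n1 + n2 + n3 + n4 + n5 + n6 + n7))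
          · -- e6 = R
            have n6 : (u 7).1 = (u 6).1 + (-1) := by linear_combination -c6
            exact Kne hm 1 (by norm_num) (by norm_num) (by push_cast; linear_combination -(n0 + n1 + n2 + n3 + n4 + n5 + n6 + n7))
        · -- e5 = L
          have n5 : (u 6).1 = (u 5).1 + 1 := c5
          exact hne 4 6 (by omega) (by omega) (adjH (Or.inl ⟨c4, l4, f4⟩) (Or.inl ⟨c5, l5, f5⟩))
        · -- e5 = R
          have n5 : (u 6).1 = (u 5).1 + (-1) := by linear_combination -c5
          exact hne 4 6 (by omega) (by omega) (adjH (Or.inl ⟨c4, l4, f4⟩) (Or.inr ⟨c5, l5, f5⟩))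
      · -- e4 = R
        have n4 : (u 5).1 = (u 4).1 + (-1) := by linear_combination -c4
        rcases A5 with ⟨c5, s5⟩ | ⟨c5, l5, f5⟩ | ⟨c5, l5, f5⟩
        · -- e5 = V
          have n5 : (u 6).1 = (u 5).1 + 0 := by rw [add_zero]; exact c5.symm
          rcases A6 with ⟨c6, s6⟩ | ⟨c6, l6, f6⟩ | ⟨c6, l6, f6⟩
          · -- e6 = V
            have n6 : (u 7).1 = (u 6).1 + 0 := by rw [add_zero]; exact c6.symm
            have ec1 : (u 4).1 = (u 1).1 := by linear_combination n1 + n2 + n3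
            have hv1 : (((u 4).1.val : ZMod 8)) = (((u 1).1.val : ZMod 8)) := by rw [ec1]
            have run1' : (u 4).2 = (u 1).2 + ((3 : ℕ) : ZMod 8) ∨ (u 4).2 = (u 1).2 - ((3 : ℕ) : ZMod 8) :=
              vrun u 3 1 (by intro k h1 h2; interval_cases k <;> first | exact ⟨c1, s1⟩ | exact ⟨c2, s2⟩ | exact ⟨c3, s3⟩)
                (fun k h1 h2 => (hne k (k + 2) (by omega) (by omega)).symm)
            have hr1 : tau (Fv (u 5)) = tau (Fv (u 0)) + ((3 : ℕ) : ZMod 8) ∨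
                tau (Fv (u 5)) = tau (Fv (u 0)) - ((3 : ℕ) : ZMod 8) := by
              rw [← f4, ← ftau0]
              rcases run1' with h | h
              · left; simp only [Fv]; linear_combination h - 2 * hv1
              · right; simp only [Fv]; linear_combination h - 2 * hv1
            have ec2 : (u 0).1 = (u 5).1 := by linear_combination n5 + n6 + n7
            have hv2 : (((u 0).1.val : ZMod 8)) = (((u 5).1.val : ZMod 8)) := by rw [ec2]
            have run2' : (u 8).2 = (u 5).2 + ((3 : ℕ) : ZMod 8) ∨ (u 8).2 = (u 5).2 - ((3 : ℕ) : ZMod 8) :=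
              vrun u 3 5 (by intro k h1 h2; interval_cases k <;> first | exact ⟨c5, s5⟩ | exact ⟨c6, s6⟩ | exact (show Vh (u 7) (u 8) by rw [hper]; exact ⟨c7, s7⟩))
                (by intro k h1 h2
                    rcases Nat.lt_or_ge (k + 2) 8 with hh | hh
                    · exact (hne k (k + 2) (by omega) (by omega)).symm
                    · rw [show k = 6 from by omega]
                      show u 8 ≠ u 6
                      rw [hper]
                      exact hne 0 6 (by omega) (by omega))
            rw [hper] at run2'
            have hr2 : Fv (u 0) = Fv (u 5) + ((3 : ℕ) : ZMod 8) ∨ Fv (u 0) = Fv (u 5) - ((3 : ℕ) : ZMod 8) := by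
              rcases run2' with h | h
              · left; simp only [Fv]; linear_combination h - 2 * hv2
              · right; simp only [Fv]; linear_combination h - 2 * hv2
            exact h2dec 3 3 (by norm_num) (by norm_num) (by norm_num) (Fv (u 0)) (Fv (u 5)) lok0 l4 hr1 hr2
          · -- e6 = L
            have n6 : (u 7).1 = (u 6).1 + 1 := c6
            exact Kne hm 1 (by norm_num) (by norm_num) (by push_cast; linear_combination -(n0 + n1 + n2 + n3 + n4 + n5 + n6 + n7))
          · -- e6 = R
            have n6 : (u 7).1 = (u 6).1 + (-1) := by linear_combination -c6
            exact Kne hm 1 (by norm_num) (by norm_num) (by push_cast; linear_combination (n0 + n1 + n2 + n3 + n4 + n5 + n6 + n7))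
        · -- e5 = L
          have n5 : (u 6).1 = (u 5).1 + 1 := c5
          exact hne 4 6 (by omega) (by omega) (adjH (Or.inr ⟨c4, l4, f4⟩) (Or.inl ⟨c5, l5, f5⟩))
        · -- e5 = R
          have n5 : (u 6).1 = (u 5).1 + (-1) := by linear_combination -c5
          exact hne 4 6 (by omega) (by omega) (adjH (Or.inr ⟨c4, l4, f4⟩) (Or.inr ⟨c5, l5, f5⟩))
    · -- e3 = L
      have n3 : (u 4).1 = (u 3).1 + 1 := c3
      rcases A4 with ⟨c4, s4⟩ | ⟨c4, l4, f4⟩ | ⟨c4, l4, f4⟩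
      · -- e4 = V
        have n4 : (u 5).1 = (u 4).1 + 0 := by rw [add_zero]; exact c4.symm
        rcases A5 with ⟨c5, s5⟩ | ⟨c5, l5, f5⟩ | ⟨c5, l5, f5⟩
        · -- e5 = V
          have n5 : (u 6).1 = (u 5).1 + 0 := by rw [add_zero]; exact c5.symm
          rcases A6 with ⟨c6, s6⟩ | ⟨c6, l6, f6⟩ | ⟨c6, l6, f6⟩
          · -- e6 = V
            have n6 : (u 7).1 = (u 6).1 + 0 := by rw [add_zero]; exact c6.symm
            exact Kne hm 2 (by norm_num) (by norm_num) (by push_cast; linear_combination -(n0 + n1 + n2 + n3 + n4 + n5 + n6 + n7))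
          · -- e6 = L
            have n6 : (u 7).1 = (u 6).1 + 1 := c6
            exact Kne hm 3 (by norm_num) (by norm_num) (by push_cast; linear_combination -(n0 + n1 + n2 + n3 + n4 + n5 + n6 + n7))
          · -- e6 = R
            have n6 : (u 7).1 = (u 6).1 + (-1) := by linear_combination -c6
            exact Kne hm 1 (by norm_num) (by norm_num) (by push_cast; linear_combination -(n0 + n1 + n2 + n3 + n4 + n5 + n6 + n7))
        · -- e5 = L
          have n5 : (u 6).1 = (u 5).1 + 1 := c5
          rcases A6 with ⟨c6, s6⟩ | ⟨c6, l6, f6⟩ | ⟨c6, l6, f6⟩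
          · -- e6 = V
            have n6 : (u 7).1 = (u 6).1 + 0 := by rw [add_zero]; exact c6.symm
            exact Kne hm 3 (by norm_num) (by norm_num) (by push_cast; linear_combination -(n0 + n1 + n2 + n3 + n4 + n5 + n6 + n7))
          · -- e6 = L
            have n6 : (u 7).1 = (u 6).1 + 1 := c6
            exact hne 5 7 (by omega) (by omega) (adjH (Or.inl ⟨c5, l5, f5⟩) (Or.inl ⟨c6, l6, f6⟩))
          · -- e6 = R
            have n6 : (u 7).1 = (u 6).1 + (-1) := by linear_combination -c6
            exact hne 5 7 (by omega) (by omega) (adjH (Or.inl ⟨c5, l5, f5⟩) (Or.inr ⟨c6, l6, f6⟩))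
        · -- e5 = R
          have n5 : (u 6).1 = (u 5).1 + (-1) := by linear_combination -c5
          rcases A6 with ⟨c6, s6⟩ | ⟨c6, l6, f6⟩ | ⟨c6, l6, f6⟩
          · -- e6 = V
            have n6 : (u 7).1 = (u 6).1 + 0 := by rw [add_zero]; exact c6.symm
            exact Kne hm 1 (by norm_num) (by norm_num) (by push_cast; linear_combination -(n0 + n1 + n2 + n3 + n4 + n5 + n6 + n7))
          · -- e6 = L
            have n6 : (u 7).1 = (u 6).1 + 1 := c6
            exact hne 5 7 (by omega) (by omega) (adjH (Or.inr ⟨c5, l5, f5⟩) (Or.inl ⟨c6, l6, f6⟩))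
          · -- e6 = R
            have n6 : (u 7).1 = (u 6).1 + (-1) := by linear_combination -c6
            exact hne 5 7 (by omega) (by omega) (adjH (Or.inr ⟨c5, l5, f5⟩) (Or.inr ⟨c6, l6, f6⟩))
      · -- e4 = L
        have n4 : (u 5).1 = (u 4).1 + 1 := c4
        exact hne 3 5 (by omega) (by omega) (adjH (Or.inl ⟨c3, l3, f3⟩) (Or.inl ⟨c4, l4, f4⟩))
      · -- e4 = R
        have n4 : (u 5).1 = (u 4).1 + (-1) := by linear_combination -c4
        exact hne 3 5 (by omega) (by omega) (adjH (Or.inl ⟨c3, l3, f3⟩) (Or.inr ⟨c4, l4, f4⟩))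
    · -- e3 = R
      have n3 : (u 4).1 = (u 3).1 + (-1) := by linear_combination -c3
      rcases A4 with ⟨c4, s4⟩ | ⟨c4, l4, f4⟩ | ⟨c4, l4, f4⟩
      · -- e4 = V
        have n4 : (u 5).1 = (u 4).1 + 0 := by rw [add_zero]; exact c4.symm
        rcases A5 with ⟨c5, s5⟩ | ⟨c5, l5, f5⟩ | ⟨c5, l5, f5⟩
        · -- e5 = V
          have n5 : (u 6).1 = (u 5).1 + 0 := by rw [add_zero]; exact c5.symm
          rcases A6 with ⟨c6, s6⟩ | ⟨c6, l6, f6⟩ | ⟨c6, l6, f6⟩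
          · -- e6 = V
            have n6 : (u 7).1 = (u 6).1 + 0 := by rw [add_zero]; exact c6.symm
            have ec1 : (u 3).1 = (u 1).1 := by linear_combination n1 + n2
            have hv1 : (((u 3).1.val : ZMod 8)) = (((u 1).1.val : ZMod 8)) := by rw [ec1]
            have run1' : (u 3).2 = (u 1).2 + ((2 : ℕ) : ZMod 8) ∨ (u 3).2 = (u 1).2 - ((2 : ℕ) : ZMod 8) :=
              vrun u 2 1 (by intro k h1 h2; interval_cases k <;> first | exact ⟨c1, s1⟩ | exact ⟨c2, s2⟩)
                (fun k h1 h2 => (hne k (k + 2) (by omega) (by omega)).symm)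
            have hr1 : tau (Fv (u 4)) = tau (Fv (u 0)) + ((2 : ℕ) : ZMod 8) ∨
                tau (Fv (u 4)) = tau (Fv (u 0)) - ((2 : ℕ) : ZMod 8) := by
              rw [← f3, ← ftau0]
              rcases run1' with h | h
              · left; simp only [Fv]; linear_combination h - 2 * hv1
              · right; simp only [Fv]; linear_combination h - 2 * hv1
            have ec2 : (u 0).1 = (u 4).1 := by linear_combination n4 + n5 + n6 + n7
            have hv2 : (((u 0).1.val : ZMod 8)) = (((u 4).1.val : ZMod 8)) := by rw [ec2]
            have run2' : (u 8).2 = (u 4).2 + ((4 : ℕ) : ZMod 8) ∨ (u 8).2 = (u 4).2 - ((4 : ℕ) : ZMod 8) :=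
              vrun u 4 4 (by intro k h1 h2; interval_cases k <;> first | exact ⟨c4, s4⟩ | exact ⟨c5, s5⟩ | exact ⟨c6, s6⟩ | exact (show Vh (u 7) (u 8) by rw [hper]; exact ⟨c7, s7⟩))
                (by intro k h1 h2
                    rcases Nat.lt_or_ge (k + 2) 8 with hh | hh
                    · exact (hne k (k + 2) (by omega) (by omega)).symm
                    · rw [show k = 6 from by omega]
                      show u 8 ≠ u 6
                      rw [hper]
                      exact hne 0 6 (by omega) (by omega))
            rw [hper] at run2'
            have hr2 : Fv (u 0) = Fv (u 4) + ((4 : ℕ) : ZMod 8) ∨ Fv (u 0) = Fv (u 4) - ((4 : ℕ) : ZMod 8) := by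
              rcases run2' with h | h
              · left; simp only [Fv]; linear_combination h - 2 * hv2
              · right; simp only [Fv]; linear_combination h - 2 * hv2
            exact h2dec 2 4 (by norm_num) (by norm_num) (by norm_num) (Fv (u 0)) (Fv (u 4)) lok0 l3 hr1 hr2
          · -- e6 = L
            have n6 : (u 7).1 = (u 6).1 + 1 := c6
            exact Kne hm 1 (by norm_num) (by norm_num) (by push_cast; linear_combination -(n0 + n1 + n2 + n3 + n4 + n5 + n6 + n7))
          · -- e6 = R
            have n6 : (u 7).1 = (u 6).1 + (-1) := by linear_combination -c6
            exact Kne hm 1 (by norm_num) (by norm_num) (by push_cast; linear_combination (n0 + n1 + n2 + n3 + n4 + n5 + n6 + n7))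
        · -- e5 = L
          have n5 : (u 6).1 = (u 5).1 + 1 := c5
          rcases A6 with ⟨c6, s6⟩ | ⟨c6, l6, f6⟩ | ⟨c6, l6, f6⟩
          · -- e6 = V
            have n6 : (u 7).1 = (u 6).1 + 0 := by rw [add_zero]; exact c6.symm
            exact Kne hm 1 (by norm_num) (by norm_num) (by push_cast; linear_combination -(n0 + n1 + n2 + n3 + n4 + n5 + n6 + n7))
          · -- e6 = L
            have n6 : (u 7).1 = (u 6).1 + 1 := c6
            exact hne 5 7 (by omega) (by omega) (adjH (Or.inl ⟨c5, l5, f5⟩) (Or.inl ⟨c6, l6, f6⟩))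
          · -- e6 = R
            have n6 : (u 7).1 = (u 6).1 + (-1) := by linear_combination -c6
            exact hne 5 7 (by omega) (by omega) (adjH (Or.inl ⟨c5, l5, f5⟩) (Or.inr ⟨c6, l6, f6⟩))
        · -- e5 = R
          have n5 : (u 6).1 = (u 5).1 + (-1) := by linear_combination -c5
          rcases A6 with ⟨c6, s6⟩ | ⟨c6, l6, f6⟩ | ⟨c6, l6, f6⟩
          · -- e6 = V
            have n6 : (u 7).1 = (u 6).1 + 0 := by rw [add_zero]; exact c6.symm
            exact Kne hm 1 (by norm_num) (by norm_num) (by push_cast; linear_combination (n0 + n1 + n2 + n3 + n4 + n5 + n6 + n7))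
          · -- e6 = L
            have n6 : (u 7).1 = (u 6).1 + 1 := c6
            exact hne 5 7 (by omega) (by omega) (adjH (Or.inr ⟨c5, l5, f5⟩) (Or.inl ⟨c6, l6, f6⟩))
          · -- e6 = R
            have n6 : (u 7).1 = (u 6).1 + (-1) := by linear_combination -c6
            exact hne 5 7 (by omega) (by omega) (adjH (Or.inr ⟨c5, l5, f5⟩) (Or.inr ⟨c6, l6, f6⟩))
      · -- e4 = L
        have n4 : (u 5).1 = (u 4).1 + 1 := c4
        exact hne 3 5 (by omega) (by omega) (adjH (Or.inr ⟨c3, l3, f3⟩) (Or.inl ⟨c4, l4, f4⟩))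
      · -- e4 = R
        have n4 : (u 5).1 = (u 4).1 + (-1) := by linear_combination -c4
        exact hne 3 5 (by omega) (by omega) (adjH (Or.inr ⟨c3, l3, f3⟩) (Or.inr ⟨c4, l4, f4⟩))
  · -- e2 = L
    have n2 : (u 3).1 = (u 2).1 + 1 := c2
    rcases A3 with ⟨c3, s3⟩ | ⟨c3, l3, f3⟩ | ⟨c3, l3, f3⟩
    · -- e3 = V
      have n3 : (u 4).1 = (u 3).1 + 0 := by rw [add_zero]; exact c3.symm
      rcases A4 with ⟨c4, s4⟩ | ⟨c4, l4, f4⟩ | ⟨c4, l4, f4⟩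
      · -- e4 = V
        have n4 : (u 5).1 = (u 4).1 + 0 := by rw [add_zero]; exact c4.symm
        rcases A5 with ⟨c5, s5⟩ | ⟨c5, l5, f5⟩ | ⟨c5, l5, f5⟩
        · -- e5 = V
          have n5 : (u 6).1 = (u 5).1 + 0 := by rw [add_zero]; exact c5.symm
          rcases A6 with ⟨c6, s6⟩ | ⟨c6, l6, f6⟩ | ⟨c6, l6, f6⟩
          · -- e6 = V
            have n6 : (u 7).1 = (u 6).1 + 0 := by rw [add_zero]; exact c6.symm
            exact Kne hm 2 (by norm_num) (by norm_num) (by push_cast; linear_combination -(n0 + n1 + n2 + n3 + n4 + n5 + n6 + n7))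
          · -- e6 = L
            have n6 : (u 7).1 = (u 6).1 + 1 := c6
            exact Kne hm 3 (by norm_num) (by norm_num) (by push_cast; linear_combination -(n0 + n1 + n2 + n3 + n4 + n5 + n6 + n7))
          · -- e6 = R
            have n6 : (u 7).1 = (u 6).1 + (-1) := by linear_combination -c6
            exact Kne hm 1 (by norm_num) (by norm_num) (by push_cast; linear_combination -(n0 + n1 + n2 + n3 + n4 + n5 + n6 + n7))
        · -- e5 = L
          have n5 : (u 6).1 = (u 5).1 + 1 := c5
          rcases A6 with ⟨c6, s6⟩ | ⟨c6, l6, f6⟩ | ⟨c6, l6, f6⟩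
          · -- e6 = V
            have n6 : (u 7).1 = (u 6).1 + 0 := by rw [add_zero]; exact c6.symm
            exact Kne hm 3 (by norm_num) (by norm_num) (by push_cast; linear_combination -(n0 + n1 + n2 + n3 + n4 + n5 + n6 + n7))
          · -- e6 = L
            have n6 : (u 7).1 = (u 6).1 + 1 := c6
            exact hne 5 7 (by omega) (by omega) (adjH (Or.inl ⟨c5, l5, f5⟩) (Or.inl ⟨c6, l6, f6⟩))
          · -- e6 = R
            have n6 : (u 7).1 = (u 6).1 + (-1) := by linear_combination -c6
            exact hne 5 7 (by omega) (by omega) (adjH (Or.inl ⟨c5, l5, f5⟩) (Or.inr ⟨c6, l6, f6⟩))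
        · -- e5 = R
          have n5 : (u 6).1 = (u 5).1 + (-1) := by linear_combination -c5
          rcases A6 with ⟨c6, s6⟩ | ⟨c6, l6, f6⟩ | ⟨c6, l6, f6⟩
          · -- e6 = V
            have n6 : (u 7).1 = (u 6).1 + 0 := by rw [add_zero]; exact c6.symm
            exact Kne hm 1 (by norm_num) (by norm_num) (by push_cast; linear_combination -(n0 + n1 + n2 + n3 + n4 + n5 + n6 + n7))
          · -- e6 = L
            have n6 : (u 7).1 = (u 6).1 + 1 := c6
            exact hne 5 7 (by omega) (by omega) (adjH (Or.inr ⟨c5, l5, f5⟩) (Or.inl ⟨c6, l6, f6⟩))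
          · -- e6 = R
            have n6 : (u 7).1 = (u 6).1 + (-1) := by linear_combination -c6
            exact hne 5 7 (by omega) (by omega) (adjH (Or.inr ⟨c5, l5, f5⟩) (Or.inr ⟨c6, l6, f6⟩))
      · -- e4 = L
        have n4 : (u 5).1 = (u 4).1 + 1 := c4
        rcases A5 with ⟨c5, s5⟩ | ⟨c5, l5, f5⟩ | ⟨c5, l5, f5⟩
        · -- e5 = V
          have n5 : (u 6).1 = (u 5).1 + 0 := by rw [add_zero]; exact c5.symm
          rcases A6 with ⟨c6, s6⟩ | ⟨c6, l6, f6⟩ | ⟨c6, l6, f6⟩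
          · -- e6 = V
            have n6 : (u 7).1 = (u 6).1 + 0 := by rw [add_zero]; exact c6.symm
            exact Kne hm 3 (by norm_num) (by norm_num) (by push_cast; linear_combination -(n0 + n1 + n2 + n3 + n4 + n5 + n6 + n7))
          · -- e6 = L
            have n6 : (u 7).1 = (u 6).1 + 1 := c6
            exact Kne hm 4 (by norm_num) (by norm_num) (by push_cast; linear_combination -(n0 + n1 + n2 + n3 + n4 + n5 + n6 + n7))
          · -- e6 = R
            have n6 : (u 7).1 = (u 6).1 + (-1) := by linear_combination -c6
            exact Kne hm 2 (by norm_num) (by norm_num) (by push_cast; linear_combination -(n0 + n1 + n2 + n3 + n4 + n5 + n6 + n7))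
        · -- e5 = L
          have n5 : (u 6).1 = (u 5).1 + 1 := c5
          exact hne 4 6 (by omega) (by omega) (adjH (Or.inl ⟨c4, l4, f4⟩) (Or.inl ⟨c5, l5, f5⟩))
        · -- e5 = R
          have n5 : (u 6).1 = (u 5).1 + (-1) := by linear_combination -c5
          exact hne 4 6 (by omega) (by omega) (adjH (Or.inl ⟨c4, l4, f4⟩) (Or.inr ⟨c5, l5, f5⟩))
      · -- e4 = R
        have n4 : (u 5).1 = (u 4).1 + (-1) := by linear_combination -c4
        rcases A5 with ⟨c5, s5⟩ | ⟨c5, l5, f5⟩ | ⟨c5, l5, f5⟩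
        · -- e5 = V
          have n5 : (u 6).1 = (u 5).1 + 0 := by rw [add_zero]; exact c5.symm
          rcases A6 with ⟨c6, s6⟩ | ⟨c6, l6, f6⟩ | ⟨c6, l6, f6⟩
          · -- e6 = V
            have n6 : (u 7).1 = (u 6).1 + 0 := by rw [add_zero]; exact c6.symm
            exact Kne hm 1 (by norm_num) (by norm_num) (by push_cast; linear_combination -(n0 + n1 + n2 + n3 + n4 + n5 + n6 + n7))
          · -- e6 = L
            have n6 : (u 7).1 = (u 6).1 + 1 := c6
            exact Kne hm 2 (by norm_num) (by norm_num) (by push_cast; linear_combination -(n0 + n1 + n2 + n3 + n4 + n5 + n6 + n7))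
          · -- e6 = R
            have n6 : (u 7).1 = (u 6).1 + (-1) := by linear_combination -c6
            have hv1 : (((u 1).1.val : ZMod 8)) = (((u 2).1.val : ZMod 8)) := by rw [c1]
            have g1 : Fv (u 2) = Fv (u 1) + 1 ∨ Fv (u 1) = Fv (u 2) + 1 := by
              rcases s1 with h | h
              · left; simp only [Fv]; linear_combination h + 2 * hv1
              · right; simp only [Fv]; linear_combination h - 2 * hv1
            have hv3 : (((u 3).1.val : ZMod 8)) = (((u 4).1.val : ZMod 8)) := by rw [c3]
            have g3 : Fv (u 4) = Fv (u 3) + 1 ∨ Fv (u 3) = Fv (u 4) + 1 := by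
              rcases s3 with h | h
              · left; simp only [Fv]; linear_combination h + 2 * hv3
              · right; simp only [Fv]; linear_combination h - 2 * hv3
            have hv5 : (((u 5).1.val : ZMod 8)) = (((u 6).1.val : ZMod 8)) := by rw [c5]
            have g5 : Fv (u 6) = Fv (u 5) + 1 ∨ Fv (u 5) = Fv (u 6) + 1 := by
              rcases s5 with h | h
              · left; simp only [Fv]; linear_combination h + 2 * hv5
              · right; simp only [Fv]; linear_combination h - 2 * hv5
            have hv7 : (((u 7).1.val : ZMod 8)) = (((u 0).1.val : ZMod 8)) := by rw [c7]
            have g7 : Fv (u 0) = Fv (u 7) + 1 ∨ Fv (u 7) = Fv (u 0) + 1 := by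
              rcases s7 with h | h
              · left; simp only [Fv]; linear_combination h + 2 * hv7
              · right; simp only [Fv]; linear_combination h - 2 * hv7
            rw [ftau0] at g1
            rw [f2] at g3
            have rok4 : ROK (Fv (u 4)) := by rw [f4]; exact ROK_tau l4
            have f4' : Fv (u 5) = tauInv (Fv (u 4)) := by rw [f4, tauInv_tau l4]
            rw [f4'] at g5
            have rok6 : ROK (Fv (u 6)) := by rw [f6]; exact ROK_tau l6
            have f6' : Fv (u 7) = tauInv (Fv (u 6)) := by rw [f6, tauInv_tau l6]
            rw [f6'] at g7
            exact patA (Fv (u 0)) (Fv (u 2)) (Fv (u 4)) (Fv (u 6)) lok0 g1 l2 g3 rok4 g5 rok6 g7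
        · -- e5 = L
          have n5 : (u 6).1 = (u 5).1 + 1 := c5
          exact hne 4 6 (by omega) (by omega) (adjH (Or.inr ⟨c4, l4, f4⟩) (Or.inl ⟨c5, l5, f5⟩))
        · -- e5 = R
          have n5 : (u 6).1 = (u 5).1 + (-1) := by linear_combination -c5
          exact hne 4 6 (by omega) (by omega) (adjH (Or.inr ⟨c4, l4, f4⟩) (Or.inr ⟨c5, l5, f5⟩))
    · -- e3 = L
      have n3 : (u 4).1 = (u 3).1 + 1 := c3
      exact hne 2 4 (by omega) (by omega) (adjH (Or.inl ⟨c2, l2, f2⟩) (Or.inl ⟨c3, l3, f3⟩))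
    · -- e3 = R
      have n3 : (u 4).1 = (u 3).1 + (-1) := by linear_combination -c3
      exact hne 2 4 (by omega) (by omega) (adjH (Or.inl ⟨c2, l2, f2⟩) (Or.inr ⟨c3, l3, f3⟩))
  · -- e2 = R
    have n2 : (u 3).1 = (u 2).1 + (-1) := by linear_combination -c2
    rcases A3 with ⟨c3, s3⟩ | ⟨c3, l3, f3⟩ | ⟨c3, l3, f3⟩
    · -- e3 = V
      have n3 : (u 4).1 = (u 3).1 + 0 := by rw [add_zero]; exact c3.symm
      rcases A4 with ⟨c4, s4⟩ | ⟨c4, l4, f4⟩ | ⟨c4, l4, f4⟩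
      · -- e4 = V
        have n4 : (u 5).1 = (u 4).1 + 0 := by rw [add_zero]; exact c4.symm
        rcases A5 with ⟨c5, s5⟩ | ⟨c5, l5, f5⟩ | ⟨c5, l5, f5⟩
        · -- e5 = V
          have n5 : (u 6).1 = (u 5).1 + 0 := by rw [add_zero]; exact c5.symm
          rcases A6 with ⟨c6, s6⟩ | ⟨c6, l6, f6⟩ | ⟨c6, l6, f6⟩
          · -- e6 = V
            have n6 : (u 7).1 = (u 6).1 + 0 := by rw [add_zero]; exact c6.symm
            have ec1 : (u 2).1 = (u 1).1 := by linear_combination n1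
            have hv1 : (((u 2).1.val : ZMod 8)) = (((u 1).1.val : ZMod 8)) := by rw [ec1]
            have run1' : (u 2).2 = (u 1).2 + ((1 : ℕ) : ZMod 8) ∨ (u 2).2 = (u 1).2 - ((1 : ℕ) : ZMod 8) :=
              vrun u 1 1 (by intro k h1 h2; interval_cases k <;> first | exact ⟨c1, s1⟩)
                (fun k h1 h2 => (hne k (k + 2) (by omega) (by omega)).symm)
            have hr1 : tau (Fv (u 3)) = tau (Fv (u 0)) + ((1 : ℕ) : ZMod 8) ∨
                tau (Fv (u 3)) = tau (Fv (u 0)) - ((1 : ℕ) : ZMod 8) := by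
              rw [← f2, ← ftau0]
              rcases run1' with h | h
              · left; simp only [Fv]; linear_combination h - 2 * hv1
              · right; simp only [Fv]; linear_combination h - 2 * hv1
            have ec2 : (u 0).1 = (u 3).1 := by linear_combination n3 + n4 + n5 + n6 + n7
            have hv2 : (((u 0).1.val : ZMod 8)) = (((u 3).1.val : ZMod 8)) := by rw [ec2]
            have run2' : (u 8).2 = (u 3).2 + ((5 : ℕ) : ZMod 8) ∨ (u 8).2 = (u 3).2 - ((5 : ℕ) : ZMod 8) :=
              vrun u 5 3 (by intro k h1 h2; interval_cases k <;> first | exact ⟨c3, s3⟩ | exact ⟨c4, s4⟩ | exact ⟨c5, s5⟩ | exact ⟨c6, s6⟩ | exact (show Vh (u 7) (u 8) by rw [hper]; exact ⟨c7, s7⟩))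
                (by intro k h1 h2
                    rcases Nat.lt_or_ge (k + 2) 8 with hh | hh
                    · exact (hne k (k + 2) (by omega) (by omega)).symm
                    · rw [show k = 6 from by omega]
                      show u 8 ≠ u 6
                      rw [hper]
                      exact hne 0 6 (by omega) (by omega))
            rw [hper] at run2'
            have hr2 : Fv (u 0) = Fv (u 3) + ((5 : ℕ) : ZMod 8) ∨ Fv (u 0) = Fv (u 3) - ((5 : ℕ) : ZMod 8) := by
              rcases run2' with h | h
              · left; simp only [Fv]; linear_combination h - 2 * hv2
              · right; simp only [Fv]; linear_combination h - 2 * hv2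
            exact h2dec 1 5 (by norm_num) (by norm_num) (by norm_num) (Fv (u 0)) (Fv (u 3)) lok0 l2 hr1 hr2
          · -- e6 = L
            have n6 : (u 7).1 = (u 6).1 + 1 := c6
            exact Kne hm 1 (by norm_num) (by norm_num) (by push_cast; linear_combination -(n0 + n1 + n2 + n3 + n4 + n5 + n6 + n7))
          · -- e6 = R
            have n6 : (u 7).1 = (u 6).1 + (-1) := by linear_combination -c6
            exact Kne hm 1 (by norm_num) (by norm_num) (by push_cast; linear_combination (n0 + n1 + n2 + n3 + n4 + n5 + n6 + n7))
        · -- e5 = L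
          have n5 : (u 6).1 = (u 5).1 + 1 := c5
          rcases A6 with ⟨c6, s6⟩ | ⟨c6, l6, f6⟩ | ⟨c6, l6, f6⟩
          · -- e6 = V
            have n6 : (u 7).1 = (u 6).1 + 0 := by rw [add_zero]; exact c6.symm
            exact Kne hm 1 (by norm_num) (by norm_num) (by push_cast; linear_combination -(n0 + n1 + n2 + n3 + n4 + n5 + n6 + n7))
          · -- e6 = L
            have n6 : (u 7).1 = (u 6).1 + 1 := c6
            exact hne 5 7 (by omega) (by omega) (adjH (Or.inl ⟨c5, l5, f5⟩) (Or.inl ⟨c6, l6, f6⟩))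
          · -- e6 = R
            have n6 : (u 7).1 = (u 6).1 + (-1) := by linear_combination -c6
            exact hne 5 7 (by omega) (by omega) (adjH (Or.inl ⟨c5, l5, f5⟩) (Or.inr ⟨c6, l6, f6⟩))
        · -- e5 = R
          have n5 : (u 6).1 = (u 5).1 + (-1) := by linear_combination -c5
          rcases A6 with ⟨c6, s6⟩ | ⟨c6, l6, f6⟩ | ⟨c6, l6, f6⟩
          · -- e6 = V
            have n6 : (u 7).1 = (u 6).1 + 0 := by rw [add_zero]; exact c6.symm
            exact Kne hm 1 (by norm_num) (by norm_num) (by push_cast; linear_combination (n0 + n1 + n2 + n3 + n4 + n5 + n6 + n7))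
          · -- e6 = L
            have n6 : (u 7).1 = (u 6).1 + 1 := c6
            exact hne 5 7 (by omega) (by omega) (adjH (Or.inr ⟨c5, l5, f5⟩) (Or.inl ⟨c6, l6, f6⟩))
          · -- e6 = R
            have n6 : (u 7).1 = (u 6).1 + (-1) := by linear_combination -c6
            exact hne 5 7 (by omega) (by omega) (adjH (Or.inr ⟨c5, l5, f5⟩) (Or.inr ⟨c6, l6, f6⟩))
      · -- e4 = L
        have n4 : (u 5).1 = (u 4).1 + 1 := c4
        rcases A5 with ⟨c5, s5⟩ | ⟨c5, l5, f5⟩ | ⟨c5, l5, f5⟩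
        · -- e5 = V
          have n5 : (u 6).1 = (u 5).1 + 0 := by rw [add_zero]; exact c5.symm
          rcases A6 with ⟨c6, s6⟩ | ⟨c6, l6, f6⟩ | ⟨c6, l6, f6⟩
          · -- e6 = V
            have n6 : (u 7).1 = (u 6).1 + 0 := by rw [add_zero]; exact c6.symm
            exact Kne hm 1 (by norm_num) (by norm_num) (by push_cast; linear_combination -(n0 + n1 + n2 + n3 + n4 + n5 + n6 + n7))
          · -- e6 = L
            have n6 : (u 7).1 = (u 6).1 + 1 := c6
            exact Kne hm 2 (by norm_num) (by norm_num) (by push_cast; linear_combination -(n0 + n1 + n2 + n3 + n4 + n5 + n6 + n7))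
          · -- e6 = R
            have n6 : (u 7).1 = (u 6).1 + (-1) := by linear_combination -c6
            have hv1 : (((u 1).1.val : ZMod 8)) = (((u 2).1.val : ZMod 8)) := by rw [c1]
            have g1 : Fv (u 2) = Fv (u 1) + 1 ∨ Fv (u 1) = Fv (u 2) + 1 := by
              rcases s1 with h | h
              · left; simp only [Fv]; linear_combination h + 2 * hv1
              · right; simp only [Fv]; linear_combination h - 2 * hv1
            have hv3 : (((u 3).1.val : ZMod 8)) = (((u 4).1.val : ZMod 8)) := by rw [c3]
            have g3 : Fv (u 4) = Fv (u 3) + 1 ∨ Fv (u 3) = Fv (u 4) + 1 := by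
              rcases s3 with h | h
              · left; simp only [Fv]; linear_combination h + 2 * hv3
              · right; simp only [Fv]; linear_combination h - 2 * hv3
            have hv5 : (((u 5).1.val : ZMod 8)) = (((u 6).1.val : ZMod 8)) := by rw [c5]
            have g5 : Fv (u 6) = Fv (u 5) + 1 ∨ Fv (u 5) = Fv (u 6) + 1 := by
              rcases s5 with h | h
              · left; simp only [Fv]; linear_combination h + 2 * hv5
              · right; simp only [Fv]; linear_combination h - 2 * hv5
            have hv7 : (((u 7).1.val : ZMod 8)) = (((u 0).1.val : ZMod 8)) := by rw [c7]
            have g7 : Fv (u 0) = Fv (u 7) + 1 ∨ Fv (u 7) = Fv (u 0) + 1 := by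
              rcases s7 with h | h
              · left; simp only [Fv]; linear_combination h + 2 * hv7
              · right; simp only [Fv]; linear_combination h - 2 * hv7
            rw [ftau0] at g1
            have rok2 : ROK (Fv (u 2)) := by rw [f2]; exact ROK_tau l2
            have f2' : Fv (u 3) = tauInv (Fv (u 2)) := by rw [f2, tauInv_tau l2]
            rw [f2'] at g3
            rw [f4] at g5
            have rok6 : ROK (Fv (u 6)) := by rw [f6]; exact ROK_tau l6
            have f6' : Fv (u 7) = tauInv (Fv (u 6)) := by rw [f6, tauInv_tau l6]
            rw [f6'] at g7
            have ecB : (u 4).1 = (u 0).1 := by linear_combination n0 + n1 + n2 + n3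
            have hFne : Fv (u 0) ≠ Fv (u 4) :=
              fun hF => hne 0 4 (by omega) (by omega) (eq_of_col_F ecB.symm hF)
            exact patB (Fv (u 0)) (Fv (u 2)) (Fv (u 4)) (Fv (u 6)) lok0 g1 rok2 g3 l4 g5 rok6 g7 hFne
        · -- e5 = L
          have n5 : (u 6).1 = (u 5).1 + 1 := c5
          exact hne 4 6 (by omega) (by omega) (adjH (Or.inl ⟨c4, l4, f4⟩) (Or.inl ⟨c5, l5, f5⟩))
        · -- e5 = R
          have n5 : (u 6).1 = (u 5).1 + (-1) := by linear_combination -c5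
          exact hne 4 6 (by omega) (by omega) (adjH (Or.inl ⟨c4, l4, f4⟩) (Or.inr ⟨c5, l5, f5⟩))
      · -- e4 = R
        have n4 : (u 5).1 = (u 4).1 + (-1) := by linear_combination -c4
        rcases A5 with ⟨c5, s5⟩ | ⟨c5, l5, f5⟩ | ⟨c5, l5, f5⟩
        · -- e5 = V
          have n5 : (u 6).1 = (u 5).1 + 0 := by rw [add_zero]; exact c5.symm
          rcases A6 with ⟨c6, s6⟩ | ⟨c6, l6, f6⟩ | ⟨c6, l6, f6⟩
          · -- e6 = V
            have n6 : (u 7).1 = (u 6).1 + 0 := by rw [add_zero]; exact c6.symm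
            exact Kne hm 1 (by norm_num) (by norm_num) (by push_cast; linear_combination (n0 + n1 + n2 + n3 + n4 + n5 + n6 + n7))
          · -- e6 = L
            have n6 : (u 7).1 = (u 6).1 + 1 := c6
            have hv1 : (((u 1).1.val : ZMod 8)) = (((u 2).1.val : ZMod 8)) := by rw [c1]
            have g1 : Fv (u 2) = Fv (u 1) + 1 ∨ Fv (u 1) = Fv (u 2) + 1 := by
              rcases s1 with h | h
              · left; simp only [Fv]; linear_combination h + 2 * hv1
              · right; simp only [Fv]; linear_combination h - 2 * hv1
            have hv3 : (((u 3).1.val : ZMod 8)) = (((u 4).1.val : ZMod 8)) := by rw [c3]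
            have g3 : Fv (u 4) = Fv (u 3) + 1 ∨ Fv (u 3) = Fv (u 4) + 1 := by
              rcases s3 with h | h
              · left; simp only [Fv]; linear_combination h + 2 * hv3
              · right; simp only [Fv]; linear_combination h - 2 * hv3
            have hv5 : (((u 5).1.val : ZMod 8)) = (((u 6).1.val : ZMod 8)) := by rw [c5]
            have g5 : Fv (u 6) = Fv (u 5) + 1 ∨ Fv (u 5) = Fv (u 6) + 1 := by
              rcases s5 with h | h
              · left; simp only [Fv]; linear_combination h + 2 * hv5
              · right; simp only [Fv]; linear_combination h - 2 * hv5
            have hv7 : (((u 7).1.val : ZMod 8)) = (((u 0).1.val : ZMod 8)) := by rw [c7]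
            have g7 : Fv (u 0) = Fv (u 7) + 1 ∨ Fv (u 7) = Fv (u 0) + 1 := by
              rcases s7 with h | h
              · left; simp only [Fv]; linear_combination h + 2 * hv7
              · right; simp only [Fv]; linear_combination h - 2 * hv7
            rw [ftau0] at g1
            have rok2 : ROK (Fv (u 2)) := by rw [f2]; exact ROK_tau l2
            have f2' : Fv (u 3) = tauInv (Fv (u 2)) := by rw [f2, tauInv_tau l2]
            rw [f2'] at g3
            have rok4 : ROK (Fv (u 4)) := by rw [f4]; exact ROK_tau l4
            have f4' : Fv (u 5) = tauInv (Fv (u 4)) := by rw [f4, tauInv_tau l4]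
            rw [f4'] at g5
            rw [f6] at g7
            exact patC (Fv (u 0)) (Fv (u 2)) (Fv (u 4)) (Fv (u 6)) lok0 g1 rok2 g3 rok4 g5 l6 g7
          · -- e6 = R
            have n6 : (u 7).1 = (u 6).1 + (-1) := by linear_combination -c6
            exact Kne hm 2 (by norm_num) (by norm_num) (by push_cast; linear_combination (n0 + n1 + n2 + n3 + n4 + n5 + n6 + n7))
        · -- e5 = L
          have n5 : (u 6).1 = (u 5).1 + 1 := c5
          exact hne 4 6 (by omega) (by omega) (adjH (Or.inr ⟨c4, l4, f4⟩) (Or.inl ⟨c5, l5, f5⟩))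
        · -- e5 = R
          have n5 : (u 6).1 = (u 5).1 + (-1) := by linear_combination -c5
          exact hne 4 6 (by omega) (by omega) (adjH (Or.inr ⟨c4, l4, f4⟩) (Or.inr ⟨c5, l5, f5⟩))
    · -- e3 = L
      have n3 : (u 4).1 = (u 3).1 + 1 := c3
      exact hne 2 4 (by omega) (by omega) (adjH (Or.inr ⟨c2, l2, f2⟩) (Or.inl ⟨c3, l3, f3⟩))
    · -- e3 = R
      have n3 : (u 4).1 = (u 3).1 + (-1) := by linear_combination -c3
      exact hne 2 4 (by omega) (by omega) (adjH (Or.inr ⟨c2, l2, f2⟩) (Or.inr ⟨c3, l3, f3⟩))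


lemma classify {m : ℕ} (hm : 6 ≤ m) {p q : ZMod m × ZMod 8} (h : (Xb2 m).Adj p q) :
    Vh p q ∨ Lh p q ∨ Lh q p := by
  haveI : NeZero m := ⟨by omega⟩
  have key : ∀ a b : ZMod m × ZMod 8, Xb2Rel m a b → Vh a b ∨ Lh a b := by
    rintro a b (⟨h1, h2⟩ | ⟨i, δ, hi, hδ, (⟨rfl, rfl⟩ | ⟨rfl, rfl⟩)⟩ |
      ⟨δ, hδ, (⟨rfl, rfl⟩ | ⟨rfl, rfl⟩)⟩)
    · exact Or.inl ⟨h1, Or.inl h2⟩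
    · right
      have hv1 : ((i : ℕ) : ZMod m).val = i := ZMod.val_cast_of_lt (by omega)
      have hv2 : ((i + 1 : ℕ) : ZMod m).val = i + 1 := ZMod.val_cast_of_lt (by omega)
      refine ⟨by push_cast; ring, ?_⟩
      interval_cases δ
      · have e1 : Fv (((i : ℕ) : ZMod m), ((2 * i + 0 : ℕ) : ZMod 8)) = 0 := by
          simp only [Fv, hv1]; push_cast; ring_nf; try decide
        have e2 : Fv (((i + 1 : ℕ) : ZMod m), ((2 * i + 0 : ℕ) : ZMod 8)) = 6 := by
          simp only [Fv, hv2]; push_cast; ring_nf; try decide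
        rw [e1, e2]; exact ⟨by decide, by decide⟩
      · have e1 : Fv (((i : ℕ) : ZMod m), ((2 * i + 1 : ℕ) : ZMod 8)) = 1 := by
          simp only [Fv, hv1]; push_cast; ring_nf; try decide
        have e2 : Fv (((i + 1 : ℕ) : ZMod m), ((2 * i + 1 : ℕ) : ZMod 8)) = 7 := by
          simp only [Fv, hv2]; push_cast; ring_nf; try decide
        rw [e1, e2]; exact ⟨by decide, by decide⟩
    · right
      have hv1 : ((i : ℕ) : ZMod m).val = i := ZMod.val_cast_of_lt (by omega)
      have hv2 : ((i + 1 : ℕ) : ZMod m).val = i + 1 := ZMod.val_cast_of_lt (by omega)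
      refine ⟨by push_cast; ring, ?_⟩
      interval_cases δ
      · have e1 : Fv (((i : ℕ) : ZMod m), ((2 * i + 4 + 0 : ℕ) : ZMod 8)) = 4 := by
          simp only [Fv, hv1]; push_cast; ring_nf; try decide
        have e2 : Fv (((i + 1 : ℕ) : ZMod m), ((2 * i + 5 : ℕ) : ZMod 8) - ((0 : ℕ) : ZMod 8)) = 3 := by
          simp only [Fv, hv2]; push_cast; ring_nf; try decide
        rw [e1, e2]; exact ⟨by decide, by decide⟩
      · have e1 : Fv (((i : ℕ) : ZMod m), ((2 * i + 4 + 1 : ℕ) : ZMod 8)) = 5 := by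
          simp only [Fv, hv1]; push_cast; ring_nf; try decide
        have e2 : Fv (((i + 1 : ℕ) : ZMod m), ((2 * i + 5 : ℕ) : ZMod 8) - ((1 : ℕ) : ZMod 8)) = 2 := by
          simp only [Fv, hv2]; push_cast; ring_nf; try decide
        rw [e1, e2]; exact ⟨by decide, by decide⟩
    · right
      have hv1 : ((m - 1 : ℕ) : ZMod m).val = m - 1 := ZMod.val_cast_of_lt (by omega)
      have hc : ((m - 1 : ℕ) : ZMod m) + 1 = 0 := by
        rw [show ((1 : ZMod m)) = ((1 : ℕ) : ZMod m) by push_cast; ring, ← Nat.cast_add,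
          show m - 1 + 1 = m by omega, ZMod.natCast_self]
      have hv0 : ((0 : ZMod m)).val = 0 := ZMod.val_zero
      refine ⟨by rw [hc], ?_⟩
      interval_cases δ
      · have e1 : Fv (((m - 1 : ℕ) : ZMod m), ((2 * (m - 1) + 0 : ℕ) : ZMod 8)) = 0 := by
          simp only [Fv, hv1]; push_cast; ring_nf; try decide
        have e2 : Fv ((0 : ZMod m), ((6 + 0 : ℕ) : ZMod 8)) = 6 := by
          simp only [Fv, hv0]; push_cast; ring_nf; try decide
        rw [e1, e2]; exact ⟨by decide, by decide⟩
      · have e1 : Fv (((m - 1 : ℕ) : ZMod m), ((2 * (m - 1) + 1 : ℕ) : ZMod 8)) = 1 := by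
          simp only [Fv, hv1]; push_cast; ring_nf; try decide
        have e2 : Fv ((0 : ZMod m), ((6 + 1 : ℕ) : ZMod 8)) = 7 := by
          simp only [Fv, hv0]; push_cast; ring_nf; try decide
        rw [e1, e2]; exact ⟨by decide, by decide⟩
    · right
      have hv1 : ((m - 1 : ℕ) : ZMod m).val = m - 1 := ZMod.val_cast_of_lt (by omega)
      have hc : ((m - 1 : ℕ) : ZMod m) + 1 = 0 := by
        rw [show ((1 : ZMod m)) = ((1 : ℕ) : ZMod m) by push_cast; ring, ← Nat.cast_add,
          show m - 1 + 1 = m by omega, ZMod.natCast_self]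
      have hv0 : ((0 : ZMod m)).val = 0 := ZMod.val_zero
      refine ⟨by rw [hc], ?_⟩
      interval_cases δ
      · have e1 : Fv (((m - 1 : ℕ) : ZMod m), ((2 * (m - 1) + 4 + 0 : ℕ) : ZMod 8)) = 4 := by
          simp only [Fv, hv1]; push_cast; ring_nf; try decide
        have e2 : Fv ((0 : ZMod m), (3 : ZMod 8) - ((0 : ℕ) : ZMod 8)) = 3 := by
          simp only [Fv, hv0]; push_cast; ring_nf; try decide
        rw [e1, e2]; exact ⟨by decide, by decide⟩
      · have e1 : Fv (((m - 1 : ℕ) : ZMod m), ((2 * (m - 1) + 4 + 1 : ℕ) : ZMod 8)) = 5 := by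
          simp only [Fv, hv1]; push_cast; ring_nf; try decide
        have e2 : Fv ((0 : ZMod m), (3 : ZMod 8) - ((1 : ℕ) : ZMod 8)) = 2 := by
          simp only [Fv, hv0]; push_cast; ring_nf; try decide
        rw [e1, e2]; exact ⟨by decide, by decide⟩
  simp only [Xb2, SimpleGraph.fromRel_adj] at h
  rcases h with ⟨hne, hrel | hrel⟩
  · rcases key _ _ hrel with hv | hl
    · exact Or.inl hv
    · exact Or.inr (Or.inl hl)
  · rcases key _ _ hrel with hv | hl
    · exact Or.inl ⟨hv.1.symm, hv.2.symm⟩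
    · exact Or.inr (Or.inr hl)



variable {VT : Type*} {G : SimpleGraph VT}

lemma support_getElem : ∀ {a b : VT} (w : G.Walk a b) (k : ℕ) (h : k < w.support.length),
    w.support[k] = w.getVert k := by
  intro a b w
  induction w with
  | nil =>
    intro k h
    simp only [Walk.support_nil, List.length_singleton] at h
    interval_cases k
    rfl
  | cons hadj q ih =>
    intro k h
    rcases k with - | k'
    · rfl
    · simp only [Walk.support_cons, Walk.getVert_cons_succ]
      rw [List.getElem_cons_succ]
      exact ih k' (by simpa [Walk.support_cons] using h)

lemma cycle_getVert_ne {a : VT} {w : G.Walk a a} (hc : w.IsCycle) (hlen : w.length = 8)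
    {j k : ℕ} (hj : 1 ≤ j) (hj8 : j ≤ 8) (hk : 1 ≤ k) (hk8 : k ≤ 8) (hjk : j ≠ k) :
    w.getVert j ≠ w.getVert k := by
  have hsl : w.support.length = 9 := by rw [Walk.length_support, hlen]
  have htl : w.support.tail.length = 8 := by rw [List.length_tail, hsl]
  obtain ⟨j', rfl⟩ : ∃ j', j = j' + 1 := ⟨j - 1, by omega⟩
  obtain ⟨k', rfl⟩ : ∃ k', k = k' + 1 := ⟨k - 1, by omega⟩
  have hget : ∀ i : ℕ, (hi : i < 8) → w.support.tail[i]'(by rw [htl]; omega) = w.getVert (i + 1) :=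
    fun i h => (List.getElem_tail ..).trans (support_getElem w (i + 1) (by rw [hsl]; omega))
  intro heq
  rw [← hget j' (by omega), ← hget k' (by omega)] at heq
  have := (hc.support_nodup.getElem_inj_iff).mp heq
  omega


end Stmt13aux

open Stmt13aux SimpleGraph in
/-- for `m > 3` divisible by `3`, the only cycles of length `8` in
`X_b^2(m)` are the `m` cycles induced on the sets `V_i = {(i, j) : j ∈ ZMod 8}`. -/
theorem stmt13 (m : ℕ) (hm3 : 3 ∣ m) (hm : 3 < m) :
    ∀ (v : ZMod m × ZMod 8) (w : (Xb2 m).Walk v v),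
      w.IsCycle → w.length = 8 →
        ∃ i : ZMod m, ∀ x : ZMod m × ZMod 8, x ∈ w.support ↔ x.1 = i := by
  intro v w hcyc hlen
  have hm6 : 6 ≤ m := by obtain ⟨k, rfl⟩ := hm3; omega
  haveI : NeZero m := ⟨by omega⟩
  set u : ℕ → ZMod m × ZMod 8 := fun k => w.getVert (k % 8) with hu
  have hgv8 : w.getVert 8 = v := by
    have := w.getVert_length
    rwa [hlen] at this
  have hu8 : ∀ k, k ≤ 8 → u k = w.getVert k := by
    intro k hk
    rcases Nat.lt_or_ge k 8 with h | h
    · simp only [hu]; rw [Nat.mod_eq_of_lt h]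
    · have hk8 : k = 8 := by omega
      subst hk8
      simp only [hu]
      rw [show (8 : ℕ) % 8 = 0 from rfl, Walk.getVert_zero, hgv8]
  have humod : ∀ k, u k = u (k % 8) := by
    intro k; simp only [hu]; congr 1; omega
  have hperiod : ∀ k, u (k + 8) = u k := by
    intro k; simp only [hu]; congr 1; omega
  have hper : u 8 = u 0 := by
    show w.getVert (8 % 8) = w.getVert (0 % 8)
    norm_num
  have hadjU : ∀ k, k < 8 → (Xb2 m).Adj (u k) (u (k + 1)) := by
    intro k hk
    rw [hu8 k (by omega), hu8 (k + 1) (by omega)]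
    exact w.adj_getVert_succ (by omega)
  have hadjAll : ∀ k, (Xb2 m).Adj (u k) (u (k + 1)) := by
    intro k
    rcases Nat.lt_or_ge (k % 8) 7 with hr | hr
    · have e1 : u k = u (k % 8) := humod k
      have e2 : u (k + 1) = u (k % 8 + 1) := by
        rw [humod (k + 1), show (k + 1) % 8 = k % 8 + 1 from by omega]
      rw [e1, e2]
      exact hadjU (k % 8) (by omega)
    · have e1 : u k = u 7 := by rw [humod k, show k % 8 = 7 from by omega]
      have e2 : u (k + 1) = u 0 := by
        rw [humod (k + 1), show (k + 1) % 8 = 0 from by omega]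
      rw [e1, e2, ← hper]
      exact hadjU 7 (by omega)
  have hne0 : ∀ j k : ℕ, j < 8 → k < 8 → j ≠ k → u j ≠ u k := by
    intro j k hj hk hjk
    rw [hu8 j (by omega), hu8 k (by omega)]
    rcases Nat.eq_zero_or_pos j with rfl | hj1 <;> rcases Nat.eq_zero_or_pos k with rfl | hk1
    · omega
    · rw [show w.getVert 0 = w.getVert 8 from by rw [hgv8, Walk.getVert_zero]]
      exact cycle_getVert_ne hcyc hlen (by omega) (by omega) (by omega) (by omega) (by omega)
    · rw [show w.getVert 0 = w.getVert 8 from by rw [hgv8, Walk.getVert_zero]]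
      exact cycle_getVert_ne hcyc hlen (by omega) (by omega) (by omega) (by omega) (by omega)
    · exact cycle_getVert_ne hcyc hlen (by omega) (by omega) (by omega) (by omega) (by omega)
  have hneAll : ∀ j k : ℕ, j % 8 ≠ k % 8 → u j ≠ u k := by
    intro j k hjk
    rw [humod j, humod k]
    exact hne0 _ _ (by omega) (by omega) hjk
  have hV : ∀ k, k < 8 → (u (k + 1)).1 = (u k).1 := by
    by_contra hx
    push_neg at hx
    obtain ⟨a, ha8, hane⟩ := hx
    rcases classify hm6 (hadjU a ha8) with hv | hL | hR
    · exact hane hv.1.symm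
    · refine key hm6 (fun k => u (a + k)) ?_ ?_ ?_ ?_
      · intro k hk
        have hcl := classify hm6 (hadjAll (a + k))
        show Vh (u (a + k)) (u (a + (k + 1))) ∨ Lh (u (a + k)) (u (a + (k + 1))) ∨
          Lh (u (a + (k + 1))) (u (a + k))
        rwa [show a + (k + 1) = (a + k) + 1 from by omega]
      · show u (a + 8) = u (a + 0)
        rw [show a + 0 = a from rfl]
        exact hperiod a
      · intro j k hjk hk8
        exact hneAll (a + j) (a + k) (by omega)
      · exact hL
    · refine key hm6 (fun k => u (a + 9 - k)) ?_ ?_ ?_ ?_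
      · intro k hk
        show Vh (u (a + 9 - k)) (u (a + 9 - (k + 1))) ∨ Lh (u (a + 9 - k)) (u (a + 9 - (k + 1))) ∨
          Lh (u (a + 9 - (k + 1))) (u (a + 9 - k))
        rw [show a + 9 - (k + 1) = a + 8 - k from by omega]
        have hcl := classify hm6 (hadjAll (a + 8 - k))
        rw [show a + 8 - k + 1 = a + 9 - k from by omega] at hcl
        rcases hcl with hv | h | h
        · exact Or.inl ⟨hv.1.symm, hv.2.symm⟩
        · exact Or.inr (Or.inr h)
        · exact Or.inr (Or.inl h)
      · show u (a + 9 - 8) = u (a + 9 - 0)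
        rw [show a + 9 - 8 = a + 1 from by omega, show a + 9 - 0 = (a + 1) + 8 from by omega]
        exact (hperiod (a + 1)).symm
      · intro j k hjk hk8
        exact hneAll (a + 9 - j) (a + 9 - k) (by omega)
      · show Lh (u (a + 9 - 0)) (u (a + 9 - 1))
        rw [show a + 9 - 0 = (a + 1) + 8 from by omega, show a + 9 - 1 = a + 8 from by omega,
          hperiod (a + 1), hperiod a]
        exact hR
  have hcol : ∀ k, k ≤ 8 → (w.getVert k).1 = v.1 := by
    intro k
    induction k with
    | zero => intro _; rw [Walk.getVert_zero]
    | succ n ih =>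
      intro h
      rw [← hu8 (n + 1) h, hV n (by omega), hu8 n (by omega)]
      exact ih (by omega)
  have hmemcol : ∀ y, y ∈ w.support → y.1 = v.1 := by
    intro y hy
    obtain ⟨n, hn, hn8⟩ := Walk.mem_support_iff_exists_getVert.mp hy
    rw [hlen] at hn8
    rw [← hn]
    exact hcol n hn8
  have htl : w.support.tail.length = 8 := by
    rw [List.length_tail, Walk.length_support, hlen]
  have hnd : w.support.tail.Nodup := hcyc.support_nodup
  have htail_sub : ∀ y, y ∈ w.support.tail → y ∈ w.support :=
    fun y hy => List.mem_of_mem_tail hy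
  have hmapnd : (w.support.tail.map Prod.snd).Nodup := by
    refine List.Nodup.map_on ?_ hnd
    intro x1 hx1 x2 hx2 hsnd
    exact Prod.ext (by rw [hmemcol x1 (htail_sub x1 hx1), hmemcol x2 (htail_sub x2 hx2)]) hsnd
  have huniv : ∀ z : ZMod 8, z ∈ w.support.tail.map Prod.snd := by
    have hcard : (w.support.tail.map Prod.snd).toFinset = Finset.univ := by
      apply Finset.eq_univ_of_card
      rw [List.toFinset_card_of_nodup hmapnd]
      · rw [List.length_map, htl, ZMod.card]
    intro z
    have := hcard ▸ Finset.mem_univ z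
    exact List.mem_toFinset.mp this
  refine ⟨v.1, fun x => ⟨fun hx => hmemcol x hx, fun hx => ?_⟩⟩
  obtain ⟨y, hy, hysnd⟩ := List.mem_map.mp (huniv x.2)
  have hxy : y = x := Prod.ext (by rw [hmemcol y (htail_sub y hy), hx]) hysnd
  exact htail_sub x (hxy ▸ hy)
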